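/- If G is a (possibly infinite) connected graph with locating chromatic number k ≥ 3, then the degree of every vertex of G is at most 4·3^(k-3); in particular G has bounded degree. -/
import Mathlib


open Set

/-- The distance from a vertex `v` to the color class of color `i`. -/
noncomputable def distClass {V : Type*} (G : SimpleGraph V) {t : ℕ}
    (c : V → Fin t) (v : V) (i : Fin t) : ℕ :=
  sInf {m : ℕ | ∃ x, c x = i ∧ G.dist v x = m}

/-- A locating coloring: a proper coloring in which all vertices have
pairwise distinct color codes. -/
noncomputable def IsLocatingColoring {V : Type*} (G : SimpleGraph V) {t : ℕ}
    (c : V → Fin t) : Prop :=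
  (∀ u v, G.Adj u v → c u ≠ c v) ∧ Function.Injective (fun v => distClass G c v)

section Aux

lemma aux_pow : ∀ a : ℕ, 2 ≤ a → a * 2 ^ (a - 1) ≤ 4 * 3 ^ (a - 2) := by
  intro a ha
  induction a, ha using Nat.le_induction with
  | base => norm_num
  | succ n hn ih =>
    have h1 : n + 1 - 1 = (n - 1) + 1 := by omega
    have h2 : n + 1 - 2 = (n - 2) + 1 := by omega
    rw [h1, h2, pow_succ, pow_succ]
    have key : 2 * 2 ^ (n - 1) ≤ n * 2 ^ (n - 1) :=
      Nat.mul_le_mul_right _ hn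
    nlinarith [ih, key]

lemma aux_main (k a : ℕ) (hk : 3 ≤ k) (ha1 : 1 ≤ a) (ha2 : a ≤ k - 1) :
    a * (2 ^ (a - 1) * 3 ^ (k - 1 - a)) ≤ 4 * 3 ^ (k - 3) := by
  rcases eq_or_lt_of_le ha1 with h | h
  · have hh : a = 1 := h.symm
    subst hh
    have h1 : k - 1 - 1 = (k - 3) + 1 := by omega
    rw [h1]
    norm_num [pow_succ]
    nlinarith [pow_pos (by norm_num : (0:ℕ) < 3) (k - 3)]
  · have h2 : 2 ≤ a := h
    have hexp : (a - 2) + (k - 1 - a) = k - 3 := by omega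
    calc a * (2 ^ (a - 1) * 3 ^ (k - 1 - a))
        = (a * 2 ^ (a - 1)) * 3 ^ (k - 1 - a) := by ring
      _ ≤ (4 * 3 ^ (a - 2)) * 3 ^ (k - 1 - a) :=
          Nat.mul_le_mul_right _ (aux_pow a h2)
      _ = 4 * 3 ^ ((a - 2) + (k - 1 - a)) := by rw [pow_add]; ring
      _ = 4 * 3 ^ (k - 3) := by rw [hexp]

variable {V : Type*} {G : SimpleGraph V} {t : ℕ} {c : V → Fin t}

lemma distClass_le (u x : V) {i : Fin t} (hx : c x = i) :
    distClass G c u i ≤ G.dist u x :=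
  Nat.sInf_le ⟨x, hx, rfl⟩

lemma distClass_self (G : SimpleGraph V) (c : V → Fin t) (u : V) :
    distClass G c u (c u) = 0 := by
  have h := distClass_le (G := G) (c := c) u u (i := c u) rfl
  rw [SimpleGraph.dist_self] at h
  omega

lemma distClass_attained (u : V) {i : Fin t} (hcls : ∃ x, c x = i) :
    ∃ x, c x = i ∧ G.dist u x = distClass G c u i := by
  obtain ⟨x, hx⟩ := hcls
  have hne : {m : ℕ | ∃ y, c y = i ∧ G.dist u y = m}.Nonempty := ⟨G.dist u x, x, hx, rfl⟩
  exact Nat.sInf_mem hne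

lemma distClass_eq_zero (hconn : G.Connected) (u : V) {i : Fin t}
    (hcls : ∃ x, c x = i) (h0 : distClass G c u i = 0) : c u = i := by
  obtain ⟨x, hx, hdx⟩ := distClass_attained (G := G) u hcls
  rw [h0] at hdx
  have huv : u = x := by
    rcases SimpleGraph.dist_eq_zero_iff_eq_or_not_reachable.mp hdx with h | h
    · exact h
    · exact absurd (hconn.preconnected u x) h
  rw [huv]; exact hx

lemma distClass_empty (u : V) {i : Fin t} (hcls : ¬ ∃ x, c x = i) :
    distClass G c u i = 0 := by
  have : {m : ℕ | ∃ x, c x = i ∧ G.dist u x = m} = ∅ := by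
    push_neg at hcls
    ext m; simp only [Set.mem_setOf_eq, Set.mem_empty_iff_false, iff_false]
    rintro ⟨x, hx, -⟩; exact hcls x hx
  simp [distClass, this]

lemma distClass_step (hconn : G.Connected) {u v : V} (hadj : G.Adj u v) (i : Fin t) :
    distClass G c u i ≤ distClass G c v i + 1 := by
  by_cases hcls : ∃ x, c x = i
  · obtain ⟨x, hx, hdx⟩ := distClass_attained (G := G) v hcls
    have h1 : G.dist u v = 1 := SimpleGraph.dist_eq_one_iff_adj.mpr hadj
    calc distClass G c u i ≤ G.dist u x := distClass_le u x hx
      _ ≤ G.dist u v + G.dist v x := hconn.dist_triangle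
      _ = distClass G c v i + 1 := by rw [h1, hdx]; omega
  · rw [distClass_empty u hcls]
    omega

end Aux

theorem stmt_11 {V : Type*} (G : SimpleGraph V) (hconn : G.Connected)
    (k : ℕ) (hk : 3 ≤ k)
    (hchiL : IsLeast {t : ℕ | ∃ c : V → Fin t, IsLocatingColoring G c} k) :
    ∀ v : V, (G.neighborSet v).Finite ∧ (G.neighborSet v).ncard ≤ 4 * 3 ^ (k - 3) := by
  classical
  obtain ⟨c, hc, hinj⟩ := hchiL.1
  intro v
  by_cases hne : (G.neighborSet v).Nonempty
  swap
  · rw [Set.not_nonempty_iff_eq_empty] at hne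
    simp [hne]
  have hdinj : Function.Injective (distClass G c) := hinj
  set cv : Fin k := c v with hcv
  set A : Finset (Fin k) := Finset.univ.filter (fun i => distClass G c v i = 1) with hA
  have hcvA : cv ∉ A := by
    simp only [hA, Finset.mem_filter, Finset.mem_univ, true_and, hcv]
    rw [distClass_self G c v]
    omega
  set opts : Fin k → Fin k → Finset ℕ := fun j i =>
    if i = cv then {1} else if i = j then {0}
    else if i ∈ A then ({1, 2} : Finset ℕ)
    else {distClass G c v i - 1, distClass G c v i, distClass G c v i + 1} with hopts
  set T : Finset (Fin k → ℕ) := A.biUnion (fun j => Fintype.piFinset (opts j)) with hT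
  -- every neighbor's code lies in T
  have hmem : ∀ u ∈ G.neighborSet v, distClass G c u ∈ T := by
    intro u hu
    rw [SimpleGraph.mem_neighborSet] at hu
    have hadjvu : G.Adj v u := hu
    have hadjuv : G.Adj u v := hu.symm
    have hcu : c u ≠ cv := hc u v hadjuv
    have hdv1 : G.dist v u = 1 := SimpleGraph.dist_eq_one_iff_adj.mpr hadjvu
    have hdu1 : G.dist u v = 1 := SimpleGraph.dist_eq_one_iff_adj.mpr hadjuv
    have hcuA : c u ∈ A := by
      simp only [hA, Finset.mem_filter, Finset.mem_univ, true_and]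
      have hle : distClass G c v (c u) ≤ 1 := by
        have h := distClass_le (G := G) v u (i := c u) rfl
        rw [hdv1] at h; exact h
      have hne0 : distClass G c v (c u) ≠ 0 := by
        intro h0
        exact hcu ((distClass_eq_zero hconn v ⟨u, rfl⟩ h0).symm)
      omega
    rw [hT, Finset.mem_biUnion]
    refine ⟨c u, hcuA, ?_⟩
    rw [Fintype.mem_piFinset]
    intro i
    simp only [hopts]
    by_cases h1 : i = cv
    · subst h1
      rw [if_pos rfl, Finset.mem_singleton]
      have hle : distClass G c u cv ≤ 1 := by
        have h := distClass_le (G := G) u v (i := cv) hcv.symm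
        rw [hdu1] at h; exact h
      have hne0 : distClass G c u cv ≠ 0 := fun h0 =>
        hcu (distClass_eq_zero hconn u ⟨v, hcv.symm⟩ h0)
      omega
    · by_cases h2 : i = c u
      · subst h2
        rw [if_neg h1, if_pos rfl, Finset.mem_singleton]
        exact distClass_self G c u
      · by_cases h3 : i ∈ A
        · rw [if_neg h1, if_neg (fun h => h2 h), if_pos h3]
          simp only [Finset.mem_insert, Finset.mem_singleton]
          have hdvi : distClass G c v i = 1 := by
            simpa [hA, Finset.mem_filter] using h3
          have hcls : ∃ x, c x = i := by
            by_contra hno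
            rw [distClass_empty v hno] at hdvi
            omega
          have hle := distClass_step (c := c) hconn hadjuv i
          rw [hdvi] at hle
          have hne0 : distClass G c u i ≠ 0 := fun h0 =>
            h2 ((distClass_eq_zero hconn u hcls h0).symm)
          omega
        · rw [if_neg h1, if_neg (fun h => h2 h), if_neg h3]
          simp only [Finset.mem_insert, Finset.mem_singleton]
          have s1 := distClass_step (c := c) hconn hadjuv i
          have s2 := distClass_step (c := c) hconn hadjvu i
          omega
  -- size of A
  have hAcard1 : 1 ≤ A.card := by
    obtain ⟨u, hu⟩ := hne
    rw [SimpleGraph.mem_neighborSet] at hu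
    have hcuA : c u ∈ A := by
      simp only [hA, Finset.mem_filter, Finset.mem_univ, true_and]
      have hdv1 : G.dist v u = 1 := SimpleGraph.dist_eq_one_iff_adj.mpr hu
      have hle : distClass G c v (c u) ≤ 1 := by
        have h := distClass_le (G := G) v u (i := c u) rfl
        rw [hdv1] at h; exact h
      have hne0 : distClass G c v (c u) ≠ 0 := fun h0 =>
        (hc u v hu.symm) ((distClass_eq_zero hconn v ⟨u, rfl⟩ h0).symm)
      omega
    exact Finset.card_pos.mpr ⟨c u, hcuA⟩
  have hAcard2 : A.card ≤ k - 1 := by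
    have hsub : A ⊆ Finset.univ.erase cv := fun i hi =>
      Finset.mem_erase.mpr ⟨fun h => hcvA (h ▸ hi), Finset.mem_univ i⟩
    calc A.card ≤ (Finset.univ.erase cv).card := Finset.card_le_card hsub
      _ = k - 1 := by rw [Finset.card_erase_of_mem (Finset.mem_univ cv)]; simp
  -- cardinality bound on T
  have hTcard : T.card ≤ 4 * 3 ^ (k - 3) := by
    have hbound : ∀ j ∈ A, (Fintype.piFinset (opts j)).card ≤
        2 ^ (A.card - 1) * 3 ^ (k - 1 - A.card) := by
      intro j hj
      have hjcv : j ≠ cv := fun h => hcvA (h ▸ hj)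
      rw [Fintype.card_piFinset]
      set B : Finset (Fin k) := A.erase j with hB
      have hBcard : B.card = A.card - 1 := by
        rw [hB, Finset.card_erase_of_mem hj]
      set s : Finset (Fin k) := insert cv (insert j B) with hs
      have hcvnot : cv ∉ insert j B := by
        intro h
        rcases Finset.mem_insert.mp h with h | h
        · exact hjcv h.symm
        · exact hcvA (Finset.mem_of_mem_erase h)
      have hjB : j ∉ B := Finset.notMem_erase j A
      set C : Finset (Fin k) := Finset.univ \ s with hC
      have hsplit : ∏ i, (opts j i).card =
          (∏ i ∈ C, (opts j i).card) * ∏ i ∈ s, (opts j i).card := by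
        rw [hC, Finset.prod_sdiff (Finset.subset_univ s)]
      have hprods : ∏ i ∈ s, (opts j i).card ≤ 2 ^ (A.card - 1) := by
        rw [hs, Finset.prod_insert hcvnot, Finset.prod_insert hjB]
        have h1 : (opts j cv).card = 1 := by simp only [hopts]; simp
        have h2 : (opts j j).card = 1 := by simp only [hopts]; simp [hjcv]
        have h3 : ∏ i ∈ B, (opts j i).card ≤ 2 ^ B.card := by
          apply Finset.prod_le_pow_card
          intro i hi
          rw [hB, Finset.mem_erase] at hi
          have hicv : i ≠ cv := fun h => hcvA (h ▸ hi.2)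
          simp only [hopts]
          simp [hicv, hi.1, hi.2]
        rw [h1, h2, one_mul, one_mul]
        calc ∏ i ∈ B, (opts j i).card ≤ 2 ^ B.card := h3
          _ = 2 ^ (A.card - 1) := by rw [hBcard]
      have hprodC : ∏ i ∈ C, (opts j i).card ≤ 3 ^ (k - 1 - A.card) := by
        have h3 : ∀ i ∈ C, (opts j i).card ≤ 3 := by
          intro i _
          simp only [hopts]
          split
          · simp
          · split
            · simp
            · split
              · exact le_trans (Finset.card_insert_le _ _) (by simp)
              · exact le_trans (Finset.card_insert_le _ _)
                  (by simpa using Nat.add_le_add_right (Finset.card_insert_le _ _) 1)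
        have hCcard : C.card = k - 1 - A.card := by
          rw [hC, Finset.card_sdiff_of_subset (Finset.subset_univ s)]
          have hscard : s.card = A.card + 1 := by
            rw [hs, Finset.card_insert_of_notMem hcvnot,
              Finset.card_insert_of_notMem hjB, hBcard]
            omega
          rw [hscard]
          simp only [Finset.card_univ, Fintype.card_fin]
          omega
        calc ∏ i ∈ C, (opts j i).card ≤ 3 ^ C.card := Finset.prod_le_pow_card _ _ _ h3
          _ = 3 ^ (k - 1 - A.card) := by rw [hCcard]
      calc ∏ i, (opts j i).card
          = (∏ i ∈ C, (opts j i).card) * ∏ i ∈ s, (opts j i).card := hsplit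
        _ ≤ 3 ^ (k - 1 - A.card) * 2 ^ (A.card - 1) := Nat.mul_le_mul hprodC hprods
        _ = 2 ^ (A.card - 1) * 3 ^ (k - 1 - A.card) := by ring
    calc T.card ≤ ∑ j ∈ A, (Fintype.piFinset (opts j)).card := Finset.card_biUnion_le
      _ ≤ A.card * (2 ^ (A.card - 1) * 3 ^ (k - 1 - A.card)) := by
          calc ∑ j ∈ A, (Fintype.piFinset (opts j)).card
              ≤ ∑ _j ∈ A, 2 ^ (A.card - 1) * 3 ^ (k - 1 - A.card) :=
                Finset.sum_le_sum hbound
            _ = A.card * (2 ^ (A.card - 1) * 3 ^ (k - 1 - A.card)) := by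
                rw [Finset.sum_const, smul_eq_mul]
      _ ≤ 4 * 3 ^ (k - 3) := aux_main k A.card hk hAcard1 hAcard2
  -- conclude
  have hsub : G.neighborSet v ⊆ (distClass G c) ⁻¹' ↑T := fun u hu => hmem u hu
  have hfin : (G.neighborSet v).Finite :=
    Set.Finite.subset (Set.Finite.preimage hdinj.injOn T.finite_toSet) hsub
  refine ⟨hfin, ?_⟩
  have himg : (distClass G c) '' G.neighborSet v ⊆ ↑T := Set.image_subset_iff.mpr hsub
  calc (G.neighborSet v).ncard
      = ((distClass G c) '' G.neighborSet v).ncard :=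
        (Set.ncard_image_of_injective _ hdinj).symm
    _ ≤ (↑T : Set (Fin k → ℕ)).ncard := Set.ncard_le_ncard himg T.finite_toSet
    _ = T.card := Set.ncard_coe_finset T
    _ ≤ 4 * 3 ^ (k - 3) := hTcard
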